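/- Let {S_i}_{i∈I} be an inverse system of spectral spaces over a directed partially ordered set I, with quasi-compact surjective transition maps, and let S = lim_i S_i. Then for every i ∈ I, the natural map π₀(S) → π₀(S_i) on spaces of connected components, induced by the projection pr_i: S → S_i, is surjective. -/

import Mathlib

/-!
The constructible topology of a spectral space is compact and Hausdorff, and quasi-compact
continuous maps remain continuous for it. The points of `lim S_i` lying over `y ∈ S_i` therefore
form the inverse limit of nonempty compact Hausdorff spaces along surjective maps, which is
nonempty by Cantor's intersection theorem. So `pr_i` is surjective, hence so is `π₀(pr_i)`.
-/

open Set Topology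

def IsSpectralSpace (X : Type*) [TopologicalSpace X] : Prop :=
  CompactSpace X ∧ T0Space X ∧ QuasiSober X ∧
    (∀ U V : Set X, IsOpen U → IsCompact U → IsOpen V → IsCompact V → IsCompact (U ∩ V)) ∧
    TopologicalSpace.IsTopologicalBasis {U : Set X | IsOpen U ∧ IsCompact U}

theorem IsSpectralSpace.spectralSpace {X : Type*} [TopologicalSpace X] (h : IsSpectralSpace X) :
    SpectralSpace X :=
  have ⟨hcompact, ht0, hsober, hinter, hbasis⟩ := h
  { toT0Space := ht0, toCompactSpace := hcompact, toQuasiSober := hsober,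
    toQuasiSeparatedSpace := ⟨hinter⟩,
    toPrespectralSpace := .of_isTopologicalBasis hbasis fun _ hU ↦ hU.2 }

section ConstructibleTopology

variable {X Y : Type*} [TopologicalSpace X] [TopologicalSpace Y]

namespace WithConstructibleTopology

theorem isClopen_preimage_ofTopology {s : Set X} (hc : IsCompact s) (ho : IsOpen s) :
    IsClopen (WithTopology.ofTopology ⁻¹' s : Set (WithConstructibleTopology X)) :=
  ⟨isOpen_compl_iff.1 <| isOpen_iff.2 <| IsCompact.isOpen_constructibleTopology_of_isClosed
      (s := sᶜ) (by rwa [compl_compl]) ho.isClosed_compl,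
    isOpen_iff.2 <| hc.isOpen_constructibleTopology_of_isOpen ho⟩

instance [T0Space X] [PrespectralSpace X] :
    TotallySeparatedSpace (WithConstructibleTopology X) := by
  have separate : ∀ {U : Set X} {a b : WithConstructibleTopology X}, IsOpen U →
      a.ofTopology ∈ U → b.ofTopology ∉ U →
      ∃ W : Set (WithConstructibleTopology X), IsClopen W ∧ a ∈ W ∧ b ∈ Wᶜ := by
    intro U a b hU ha hb
    obtain ⟨V, ⟨hVo, hVc⟩, haV, hVU⟩ :=
      PrespectralSpace.isTopologicalBasis.exists_subset_of_mem_open ha hU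
    exact ⟨_, isClopen_preimage_ofTopology hVc hVo, haV, fun hbV ↦ hb (hVU hbV)⟩
  refine totallySeparatedSpace_iff_exists_isClopen.2 fun x y hxy ↦ ?_
  obtain ⟨U, hU, ⟨hx, hy⟩ | ⟨hy, hx⟩⟩ :=
    exists_isOpen_xor_mem ((WithTopology.ofTopology_injective _).ne hxy)
  · exact separate hU hx hy
  · obtain ⟨W, hW, hyW, hxW⟩ := separate hU hy hx
    exact ⟨Wᶜ, hW.compl, hxW, by rwa [compl_compl]⟩

end WithConstructibleTopology

theorem IsSpectralMap.continuous_constructibleTopology {f : X → Y} (hf : IsSpectralMap f) :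
    Continuous[constructibleTopology X, constructibleTopology Y] f := by
  refine continuous_generateFrom_iff.2 ?_
  rintro s (⟨ho, hc⟩ | ⟨hcl, hc⟩)
  · exact (hc.preimage_of_isOpen hf ho).isOpen_constructibleTopology_of_isOpen
      (ho.preimage hf.continuous)
  · refine IsCompact.isOpen_constructibleTopology_of_isClosed ?_ (hcl.preimage hf.continuous)
    simpa only [preimage_compl] using hc.preimage_of_isOpen hf hcl.isOpen_compl

theorem IsSpectralMap.continuous_withConstructibleTopology {f : X → Y} (hf : IsSpectralMap f) :
    Continuous fun x : WithConstructibleTopology X ↦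
      WithTopology.toTopology (constructibleTopology Y) (f x.ofTopology) :=
  continuous_def.2 fun _ hs ↦ @Continuous.isOpen_preimage _ _ (constructibleTopology X)
    (constructibleTopology Y) _ hf.continuous_constructibleTopology _ hs

end ConstructibleTopology

theorem exists_compatible_family_apply_eq {I : Type*} [Preorder I] [IsDirectedOrder I]
    {X : I → Type*} [∀ i, TopologicalSpace (X i)]
    [∀ i, CompactSpace (X i)] [∀ i, T2Space (X i)] (f : ∀ {i j : I}, j ≤ i → X i → X j)
    (hf_comp : ∀ {i j k : I} (hij : j ≤ i) (hjk : k ≤ j) (x : X i),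
      f hjk (f hij x) = f (hjk.trans hij) x)
    (hf_cont : ∀ {i j : I} (h : j ≤ i), Continuous (f h))
    (hf_surj : ∀ {i j : I} (h : j ≤ i), Function.Surjective (f h)) (i : I) (y : X i) :
    ∃ x : ∀ j, X j, (∀ (j k : I) (h : k ≤ j), f h (x j) = x k) ∧ x i = y := by
  classical
  have : ∀ k, Nonempty (X k) := fun k ↦
    have ⟨m, hkm, him⟩ := exists_ge_ge k i
    ⟨f hkm (hf_surj him y).choose⟩
  let C : I → Set (∀ j, X j) := fun m ↦
    {x | x i = y} ∩ ⋂ (j) (k) (h : k ≤ j) (_ : j ≤ m), {x | f h (x j) = x k}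
  have hC_closed : ∀ m, IsClosed (C m) := fun m ↦
    (isClosed_eq (continuous_apply i) continuous_const).inter <|
      isClosed_iInter fun j ↦ isClosed_iInter fun k ↦ isClosed_iInter fun h ↦
        isClosed_iInter fun _ ↦ isClosed_eq ((hf_cont h).comp (continuous_apply j))
          (continuous_apply k)
  have hC_anti : Antitone C := fun m m' hmm' x ⟨hxi, hx⟩ ↦
    ⟨hxi, mem_iInter₂.2 fun j k ↦ mem_iInter₂.2 fun h hjm ↦
      mem_iInter₂.1 (mem_iInter₂.1 hx j k) h (hjm.trans hmm')⟩
  have hC_nonempty : ∀ m, (C m).Nonempty := by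
    intro m
    obtain ⟨n, hmn, hin⟩ := exists_ge_ge m i
    obtain ⟨z, rfl⟩ := hf_surj hin y
    refine ⟨fun j ↦ if hjn : j ≤ n then f hjn z else Classical.arbitrary _, ?_, ?_⟩
    · simp [hin]
    · simp only [mem_iInter]
      intro j k h hjm
      simp [hjm.trans hmn, (h.trans hjm).trans hmn, hf_comp]
  have : Nonempty I := ⟨i⟩
  obtain ⟨x, hx⟩ := IsCompact.nonempty_iInter_of_directed_nonempty_isCompact_isClosed C
    hC_anti.directed_ge hC_nonempty (fun m ↦ (hC_closed m).isCompact) hC_closed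
  simp only [C, mem_iInter, mem_inter_iff] at hx
  exact ⟨x, fun j k h ↦ (hx j).2 j k h le_rfl, (hx i).1⟩

theorem exists_compatible_family_apply_eq_of_spectralSpace {I : Type*} [Preorder I]
    [IsDirectedOrder I] {S : I → Type*} [∀ i, TopologicalSpace (S i)]
    [∀ i, SpectralSpace (S i)]
    (p : ∀ {i j : I}, j ≤ i → S i → S j)
    (hp_comp : ∀ {i j k : I} (hij : j ≤ i) (hjk : k ≤ j) (x : S i),
      p hjk (p hij x) = p (hjk.trans hij) x)
    (hp_spectral : ∀ {i j : I} (h : j ≤ i), IsSpectralMap (p h))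
    (hp_surj : ∀ {i j : I} (h : j ≤ i), Function.Surjective (p h)) (i : I) (y : S i) :
    ∃ x : ∀ j, S j, (∀ (j k : I) (h : k ≤ j), p h (x j) = x k) ∧ x i = y := by
  obtain ⟨x, hx, hxi⟩ := exists_compatible_family_apply_eq
    (X := fun j ↦ WithConstructibleTopology (S j))
    (fun h x ↦ WithTopology.toTopology _ (p h x.ofTopology))
    (fun hij hjk x ↦ congrArg _ (hp_comp hij hjk x.ofTopology))
    (fun h ↦ (hp_spectral h).continuous_withConstructibleTopology)
    (fun h y ↦ have ⟨x, hx⟩ := hp_surj h y.ofTopology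
      ⟨WithTopology.toTopology _ x, congrArg _ hx⟩)
    i (WithTopology.toTopology _ y)
  exact ⟨fun j ↦ (x j).ofTopology, fun j k h ↦ congrArg WithTopology.ofTopology (hx j k h),
    congrArg WithTopology.ofTopology hxi⟩

theorem stmt_7_general {I : Type*} [PartialOrder I] [IsDirected I (· ≤ ·)]
    (S : I → Type*) [∀ i, TopologicalSpace (S i)]
    (p : ∀ {i j : I}, j ≤ i → S i → S j)
    (hp_comp : ∀ {i j k : I} (hij : j ≤ i) (hjk : k ≤ j) (x : S i),
      p hjk (p hij x) = p (hjk.trans hij) x)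
    (hcont : ∀ (i j : I) (h : j ≤ i), Continuous (p h))
    (hspectral : ∀ i : I, IsSpectralSpace (S i))
    (hqc : ∀ (i j : I) (h : j ≤ i) (U : Set (S j)), IsOpen U → IsCompact U →
      IsCompact (p h ⁻¹' U))
    (hsurj : ∀ (i j : I) (h : j ≤ i), Function.Surjective (p h)) :
    ∀ i : I, ∃ q : ConnectedComponents
        {x : ∀ i, S i // ∀ (i j : I) (h : j ≤ i), p h (x i) = x j} →
        ConnectedComponents (S i),
      Continuous q ∧
      (∀ x : {x : ∀ i, S i // ∀ (i j : I) (h : j ≤ i), p h (x i) = x j},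
        q (ConnectedComponents.mk x) = ConnectedComponents.mk (x.1 i)) ∧
      Function.Surjective q := by
  intro i
  have hpr : Continuous fun x : {x : ∀ i, S i // ∀ (i j : I) (h : j ≤ i), p h (x i) = x j} ↦
      x.1 i :=
    (continuous_apply i).comp continuous_subtype_val
  refine ⟨hpr.connectedComponentsMap, hpr.connectedComponentsMap_continuous, fun _ ↦ rfl,
    hpr.connectedComponentsMap_surjective fun y ↦ ?_⟩
  have := fun j ↦ (hspectral j).spectralSpace
  obtain ⟨x, hx, hxi⟩ := exists_compatible_family_apply_eq_of_spectralSpace p hp_comp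
    (fun h ↦ ⟨hcont _ _ h, hqc _ _ h⟩) (fun h ↦ hsurj _ _ h) i y
  exact ⟨⟨x, hx⟩, hxi⟩

/-- Let `{S i}` be an inverse system of spectral spaces over a directed
partially ordered set, with quasi-compact surjective continuous transition maps, and let
`S = lim_i S i`.  Then for every `i`, the natural (continuous) map `π₀(S) → π₀(S i)`
induced by the projection `pr_i : S → S i` is surjective. -/
theorem stmt_7 {I : Type*} [PartialOrder I] [IsDirected I (· ≤ ·)]
    (S : I → Type*) [∀ i, TopologicalSpace (S i)]
    (p : ∀ {i j : I}, j ≤ i → S i → S j)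
    (hp_id : ∀ (i : I) (x : S i), p (le_refl i) x = x)
    (hp_comp : ∀ {i j k : I} (hij : j ≤ i) (hjk : k ≤ j) (x : S i),
      p hjk (p hij x) = p (hjk.trans hij) x)
    (hcont : ∀ (i j : I) (h : j ≤ i), Continuous (p h))
    (hspectral : ∀ i : I, IsSpectralSpace (S i))
    (hqc : ∀ (i j : I) (h : j ≤ i) (U : Set (S j)), IsOpen U → IsCompact U →
      IsCompact (p h ⁻¹' U))
    (hsurj : ∀ (i j : I) (h : j ≤ i), Function.Surjective (p h)) :
    ∀ i : I, ∃ q : ConnectedComponents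
        {x : ∀ i, S i // ∀ (i j : I) (h : j ≤ i), p h (x i) = x j} →
        ConnectedComponents (S i),
      Continuous q ∧
      (∀ x : {x : ∀ i, S i // ∀ (i j : I) (h : j ≤ i), p h (x i) = x j},
        q (ConnectedComponents.mk x) = ConnectedComponents.mk (x.1 i)) ∧
      Function.Surjective q :=
  stmt_7_general S p hp_comp hcont hspectral hqc hsurj
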